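/- Let G be a connected graph and T, T' elimination trees of G. If the subforest of T induced by the set of (T, T')-bad vertices has more than k connected components, then dist(T, T') > k. -/

import Mathlib

open Relation Set

/-- An elimination tree of a graph `G`: a rooted tree on the vertex set (given by a parent
function) such that every vertex reaches the root by iterating `parent`, and for every edge
of `G` one endpoint is an ancestor of the other. -/
structure ElimTree (V : Type) (G : SimpleGraph V) where
  parent : V → Option V
  root : V
  root_parent : parent root = none
  reaches_root : ∀ v : V, Relation.ReflTransGen (fun a b => parent a = some b) v root
  hierarchy : ∀ x y : V, G.Adj x y →
    Relation.ReflTransGen (fun a b => parent a = some b) y x ∨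
    Relation.ReflTransGen (fun a b => parent a = some b) x y

namespace ElimTree

variable {V : Type} {G : SimpleGraph V}

/-- `T.Anc x y` means `x` is an ancestor of `y` in `T` (including `x = y`). -/
def Anc (T : ElimTree V G) (x y : V) : Prop :=
  Relation.ReflTransGen (fun a b => T.parent a = some b) y x

/-- The set of children of `v` in `T`. -/
def children (T : ElimTree V G) (v : V) : Set V := {w | T.parent w = some v}

/-- The vertex set of the subtree of `T` rooted at `v`. -/
def subtree (T : ElimTree V G) (v : V) : Set V := {x | T.Anc v x}

/-- `a b` is an edge of the tree `T`. -/
def IsEdge (T : ElimTree V G) (a b : V) : Prop :=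
  T.parent b = some a ∨ T.parent a = some b

/-- The tree `T` viewed as an undirected simple graph. -/
def toGraph (T : ElimTree V G) : SimpleGraph V where
  Adj a b := a ≠ b ∧ T.IsEdge a b
  symm := ⟨fun a b h => ⟨h.1.symm, h.2.symm⟩⟩
  loopless := ⟨fun a h => h.1 rfl⟩

/-- `T'` is obtained from `T` by rotating the edge `uv`, where `u = parent(T, v)`:
`v` takes `u`'s place, `u` becomes a child of `v`, children of `u` stay children of `u`,
and each child `w` of `v` becomes a child of `u` iff `u` has a `G`-neighbor in the subtree
of `T` rooted at `w`; all other vertices keep their parent. -/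
def IsRot (T T' : ElimTree V G) (u v : V) : Prop :=
  T.parent v = some u ∧
  T'.parent u = some v ∧
  T'.parent v = T.parent u ∧
  (∀ w, w ≠ v → T.parent w = some u → T'.parent w = some u) ∧
  (∀ w, T.parent w = some v →
    (((∃ x ∈ T.subtree w, G.Adj u x) → T'.parent w = some u) ∧
     ((¬ ∃ x ∈ T.subtree w, G.Adj u x) → T'.parent w = some v))) ∧
  (∀ s, s ≠ u → s ≠ v → T.parent s ≠ some u → T.parent s ≠ some v →
    T'.parent s = T.parent s)

/-- `(f, e)` is an `n`-rotation sequence from `T` to `T'`: `f i` are the intermediate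
elimination trees and `e i` the rotated edges. -/
def RotSeq (T T' : ElimTree V G) (n : ℕ) (f : ℕ → ElimTree V G) (e : ℕ → V × V) : Prop :=
  f 0 = T ∧ f n = T' ∧ ∀ i < n, IsRot (f i) (f (i + 1)) (e i).1 (e i).2

/-- A vertex `x` is used by the rotation sequence with edges `e` of length `n`. -/
def Uses (n : ℕ) (e : ℕ → V × V) (x : V) : Prop :=
  ∃ i < n, (e i).1 = x ∨ (e i).2 = x

/-- The rotation distance between two elimination trees. -/
noncomputable def rotDist (T T' : ElimTree V G) : ℕ :=
  sInf {n | ∃ f e, RotSeq T T' n f e}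

/-- `v` is `(T, T')`-children-bad. -/
def ChildrenBad (T T' : ElimTree V G) (v : V) : Prop := T.children v ≠ T'.children v

/-- `v` is `(T, T')`-parent-bad. -/
def ParentBad (T T' : ElimTree V G) (v : V) : Prop := T.parent v ≠ T'.parent v

/-- `v` is `(T, T')`-bad. -/
def Bad (T T' : ElimTree V G) (v : V) : Prop := ChildrenBad T T' v ∨ ParentBad T T' v

/-- The ball of radius `r` around the set `S` in the tree `T`. -/
def ball (T : ElimTree V G) (S : Set V) (r : ℕ) : Set V :=
  {x | ∃ s ∈ S, T.toGraph.dist s x ≤ r}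

end ElimTree

namespace ElimTree

variable {V : Type} {G : SimpleGraph V}

/-- No vertex is its own parent. -/
lemma parent_ne_self (T : ElimTree V G) (x : V) : T.parent x ≠ some x := by
  intro hself
  have key : ∀ b, Relation.ReflTransGen (fun a b => T.parent a = some b) x b → b = x := by
    intro b hr
    induction hr with
    | refl => rfl
    | tail _ hstep ih =>
      rw [ih, hself] at hstep
      exact (Option.some_injective _ hstep).symm
  have hroot : T.root = x := key _ (T.reaches_root x)
  have := T.root_parent
  rw [hroot, hself] at this
  exact nomatch this

/-- No 2-cycles in the parent relation. -/
lemma parent_no_two_cycle (T : ElimTree V G) {x y : V}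
    (hxy : T.parent x = some y) (hyx : T.parent y = some x) : False := by
  have key : ∀ b, Relation.ReflTransGen (fun a b => T.parent a = some b) x b → b = x ∨ b = y := by
    intro b hr
    induction hr with
    | refl => exact Or.inl rfl
    | tail _ hstep ih =>
      rcases ih with h | h
      · rw [h, hxy] at hstep
        exact Or.inr (Option.some_injective _ hstep).symm
      · rw [h, hyx] at hstep
        exact Or.inl (Option.some_injective _ hstep).symm
  rcases key _ (T.reaches_root x) with h | h
  · rw [← h] at hxy; rw [T.root_parent] at hxy; exact nomatch hxy
  · rw [← h] at hyx; rw [T.root_parent] at hyx; exact nomatch hyx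

section Rot

variable {T₁ T₂ : ElimTree V G} {u v : V} (hR : IsRot T₁ T₂ u v)

include hR

lemma rot_ne : u ≠ v := by
  intro h
  exact parent_ne_self T₁ v (h ▸ hR.1)

/-- Classification of parent changes for non-endpoints. -/
lemma rot_parent_change {x : V} (hxu : x ≠ u) (hxv : x ≠ v)
    (hch : T₂.parent x ≠ T₁.parent x) :
    T₁.parent x = some v ∧ T₂.parent x = some u := by
  obtain ⟨h1, h2, h3, h4, h5, h6⟩ := hR
  by_cases hpu : T₁.parent x = some u
  · exact absurd (by rw [h4 x hxv hpu, hpu]) hch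
  · by_cases hpv : T₁.parent x = some v
    · refine ⟨hpv, ?_⟩
      rcases h5 x hpv with ⟨hmov, hstay⟩
      by_cases hex : ∃ y ∈ T₁.subtree x, G.Adj u y
      · exact hmov hex
      · exact absurd (by rw [hstay hex, hpv]) hch
    · exact absurd (h6 x hxu hxv hpu hpv) hch

/-- If `x` is not an endpoint and not the old parent of `u`, its children don't change. -/
lemma rot_children_eq {x : V} (hxu : x ≠ u) (hxv : x ≠ v)
    (hp : T₁.parent u ≠ some x) : T₂.children x = T₁.children x := by
  obtain ⟨h1, h2, h3, h4, h5, h6⟩ := hR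
  ext w
  show T₂.parent w = some x ↔ T₁.parent w = some x
  by_cases hwu : w = u
  · subst hwu
    rw [h2]
    constructor
    · intro hh; exact absurd (Option.some_injective _ hh).symm hxv
    · intro hh; exact absurd hh hp
  · by_cases hwv : w = v
    · subst hwv
      rw [h3, h1]
      constructor
      · intro hh; exact absurd hh hp
      · intro hh; exact absurd (Option.some_injective _ hh).symm hxu
    · by_cases hw1 : T₁.parent w = some u
      · rw [h4 w hwv hw1, hw1]
      · by_cases hw2 : T₁.parent w = some v
        · rcases h5 w hw2 with ⟨hmov, hstay⟩
          have h2' : T₂.parent w = some u ∨ T₂.parent w = some v := by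
            by_cases hex : ∃ y ∈ T₁.subtree w, G.Adj u y
            · exact Or.inl (hmov hex)
            · exact Or.inr (hstay hex)
          constructor
          · intro hh
            rcases h2' with h | h <;> rw [hh] at h
            · exact absurd (Option.some_injective _ h) hxu
            · exact absurd (Option.some_injective _ h) hxv
          · intro hh
            rw [hw2] at hh
            exact absurd (Option.some_injective _ hh).symm hxv
        · rw [h6 w hwu hwv hw1 hw2]

/-- If `x` is not an endpoint but is the old parent of `u`, its children get `u`
swapped for `v`. -/
lemma rot_children_swap {x : V} (hxu : x ≠ u) (hxv : x ≠ v)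
    (hp : T₁.parent u = some x) :
    T₂.children x = insert v (T₁.children x \ {u}) := by
  have huv : u ≠ v := rot_ne hR
  obtain ⟨h1, h2, h3, h4, h5, h6⟩ := hR
  ext w
  show T₂.parent w = some x ↔ _
  rw [Set.mem_insert_iff, Set.mem_diff, Set.mem_singleton_iff]
  show _ ↔ w = v ∨ (T₁.parent w = some x ∧ w ≠ u)
  by_cases hwu : w = u
  · subst hwu
    rw [h2]
    constructor
    · intro hh; exact absurd (Option.some_injective _ hh).symm hxv
    · rintro (hh | ⟨-, hh⟩)
      · exact absurd hh huv
      · exact absurd rfl hh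
  · by_cases hwv : w = v
    · subst hwv
      rw [h3, hp]
      simp
    · constructor
      · intro hh
        by_cases hw1 : T₁.parent w = some u
        · rw [h4 w hwv hw1] at hh
          exact absurd (Option.some_injective _ hh).symm hxu
        · by_cases hw2 : T₁.parent w = some v
          · rcases h5 w hw2 with ⟨hmov, hstay⟩
            have h2' : T₂.parent w = some u ∨ T₂.parent w = some v := by
              by_cases hex : ∃ y ∈ T₁.subtree w, G.Adj u y
              · exact Or.inl (hmov hex)
              · exact Or.inr (hstay hex)
            rcases h2' with h | h <;> rw [hh] at h
            · exact absurd (Option.some_injective _ h) hxu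
            · exact absurd (Option.some_injective _ h) hxv
          · rw [h6 w hwu hwv hw1 hw2] at hh
            exact Or.inr ⟨hh, hwu⟩
      · rintro (hh | ⟨hh, -⟩)
        · exact absurd hh hwv
        · have hw1 : T₁.parent w ≠ some u := by
            rw [hh]; intro hc; exact hxu (Option.some_injective _ hc)
          have hw2 : T₁.parent w ≠ some v := by
            rw [hh]; intro hc; exact hxv (Option.some_injective _ hc)
          rw [h6 w hwu hwv hw1 hw2]
          exact hh

/-- For non-endpoints, the number of children is preserved by a rotation. -/
lemma rot_children_ncard [Fintype V] {x : V} (hxu : x ≠ u) (hxv : x ≠ v) :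
    (T₂.children x).ncard = (T₁.children x).ncard := by
  by_cases hp : T₁.parent u = some x
  · rw [rot_children_swap hR hxu hxv hp]
    have hu : u ∈ T₁.children x := hp
    have hv : v ∉ T₁.children x \ {u} := by
      rintro ⟨hv, -⟩
      have : some u = some x := by rw [← hR.1]; exact hv
      exact hxu (Option.some_injective _ this).symm
    rw [Set.ncard_insert_of_notMem hv, Set.ncard_diff_singleton_add_one hu]
  · rw [rot_children_eq hR hxu hxv hp]

end Rot

end ElimTree


namespace ElimTree

variable {V : Type} {G : SimpleGraph V}

section Seq

variable {ℓ : ℕ} {f : ℕ → ElimTree V G} {e : ℕ → V × V}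

/-- For a vertex that is never a rotation endpoint, the number of children is invariant
along the rotation sequence. -/
lemma seq_children_ncard [Fintype V]
    (hrot : ∀ i < ℓ, IsRot (f i) (f (i + 1)) (e i).1 (e i).2)
    {x : V} (hx : ∀ i < ℓ, (e i).1 ≠ x ∧ (e i).2 ≠ x) :
    ∀ i ≤ ℓ, ((f i).children x).ncard = ((f 0).children x).ncard := by
  intro i
  induction i with
  | zero => intro _; rfl
  | succ n ih =>
    intro hn
    have hnℓ : n < ℓ := hn
    rw [rot_children_ncard (hrot n hnℓ) (hx n hnℓ).1.symm (hx n hnℓ).2.symm]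
    exact ih (le_of_lt hnℓ)

/-- If the parent of `x` differs at times `0` and `ℓ`, there is a first change. -/
lemma seq_first_change {x : V} (hch : (f 0).parent x ≠ (f ℓ).parent x) :
    ∃ j < ℓ, (f j).parent x = (f 0).parent x ∧ (f (j + 1)).parent x ≠ (f 0).parent x := by
  by_contra hcon
  push_neg at hcon
  have key : ∀ i ≤ ℓ, (f i).parent x = (f 0).parent x := by
    intro i
    induction i with
    | zero => intro _; rfl
    | succ n ih =>
      intro hn
      have hnℓ : n < ℓ := hn
      exact hcon n hnℓ (ih (le_of_lt hnℓ))
  exact hch (key ℓ le_rfl).symm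

/-- If the parent of `x` at time `i` differs from that at time `0`, there is a last change
before time `i`. -/
lemma seq_last_change {x : V} {i : ℕ}
    (hch : (f i).parent x ≠ (f 0).parent x) :
    ∃ j < i, (f (j + 1)).parent x = (f i).parent x ∧ (f j).parent x ≠ (f i).parent x := by
  by_contra hcon
  push_neg at hcon
  have key : ∀ m ≤ i, (f (i - m)).parent x = (f i).parent x := by
    intro m
    induction m with
    | zero => intro _; rw [Nat.sub_zero]
    | succ n ih =>
      intro hn
      have h1 : i - (n + 1) < i := by omega
      have h2 : i - (n + 1) + 1 = i - n := by omega
      exact hcon (i - (n + 1)) h1 (by rw [h2]; exact ih (by omega))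
  have hfin := key i le_rfl
  rw [Nat.sub_self] at hfin
  exact hch hfin.symm

end Seq

end ElimTree


/-- if the subforest of `T` induced by the `(T, T')`-bad vertices has more
than `k` connected components, then `dist(T, T') > k`, i.e. there is no rotation sequence
of length at most `k` from `T` to `T'`. -/
theorem many_bad_components_no_short_seq {V : Type} [Fintype V] [DecidableEq V]
    {G : SimpleGraph V} (hG : G.Connected) (T T' : ElimTree V G) (k : ℕ)
    (h : k < Nat.card ((T.toGraph.induce {v | ElimTree.Bad T T' v}).ConnectedComponent)) :
    ∀ ℓ ≤ k, ∀ (f : ℕ → ElimTree V G) (e : ℕ → V × V), ¬ ElimTree.RotSeq T T' ℓ f e := by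
  intro ℓ hℓk f e hseq
  obtain ⟨hf0, hfl, hrot⟩ := hseq
  subst hf0
  subst hfl
  set B0 : Set V := {v | ElimTree.Bad (f 0) (f ℓ) v} with hB0def
  set H : SimpleGraph B0 := ((f 0).toGraph.induce B0) with hHdef
  -- connecting bad vertices along tree edges of `f 0`
  have edge_mk : ∀ (x y : V) (hx : x ∈ B0) (hy : y ∈ B0), (f 0).parent y = some x →
      H.connectedComponentMk ⟨x, hx⟩ = H.connectedComponentMk ⟨y, hy⟩ := by
    intro x y hx hy hpar
    apply SimpleGraph.ConnectedComponent.sound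
    apply SimpleGraph.Adj.reachable
    have hxy : x ≠ y := by
      intro hxy
      subst hxy
      exact ElimTree.parent_ne_self (f 0) x hpar
    show ((f 0).toGraph.induce B0).Adj ⟨x, hx⟩ ⟨y, hy⟩
    exact (⟨hxy, Or.inl hpar⟩ : x ≠ y ∧ (f 0).IsEdge x y)
  -- membership of a vertex in a component
  let inC : V → H.ConnectedComponent → Prop :=
    fun x C => ∃ hx : x ∈ B0, H.connectedComponentMk ⟨x, hx⟩ = C
  have inC_unique : ∀ (x : V) (X Y : H.ConnectedComponent), inC x X → inC x Y → X = Y := by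
    rintro x X Y ⟨h1, e1⟩ ⟨h2, e2⟩
    rw [← e1, ← e2]
  -- the set of times whose rotated edge has an endpoint in a component
  let EP : H.ConnectedComponent → Set ℕ :=
    fun C => {i | i < ℓ ∧ (inC (e i).1 C ∨ inC (e i).2 C)}
  -- CLAIM (E) : every component contains an endpoint of some rotation
  have hEP : ∀ C : H.ConnectedComponent, (EP C).Nonempty := by
    intro C
    by_contra hno
    rw [Set.not_nonempty_iff_eq_empty] at hno
    have hC : ∀ i < ℓ, ¬ (inC (e i).1 C ∨ inC (e i).2 C) := by
      intro i hi hor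
      have hmem : i ∈ EP C := ⟨hi, hor⟩
      rw [hno] at hmem
      exact hmem
    -- no member of C is ever an endpoint
    have hnend : ∀ (x : V) (hx : x ∈ B0), H.connectedComponentMk ⟨x, hx⟩ = C →
        ∀ i < ℓ, (e i).1 ≠ x ∧ (e i).2 ≠ x := by
      intro x hx hmk i hi
      constructor
      · intro hh; subst hh; exact hC i hi (Or.inl ⟨hx, hmk⟩)
      · intro hh; subst hh; exact hC i hi (Or.inr ⟨hx, hmk⟩)
    -- no member of C is parent-bad
    have hnp : ∀ (x : V) (hx : x ∈ B0), H.connectedComponentMk ⟨x, hx⟩ = C →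
        (f 0).parent x = (f ℓ).parent x := by
      intro x hx hmk
      by_contra hpb
      obtain ⟨j, hj, hj0, hj1⟩ := ElimTree.seq_first_change hpb
      have hxe := hnend x hx hmk j hj
      have hcls := ElimTree.rot_parent_change (hrot j hj) hxe.1.symm hxe.2.symm
        (by rw [hj0]; exact hj1)
      have hpar0 : (f 0).parent x = some ((e j).2) := by rw [← hj0]; exact hcls.1
      by_cases hwB : (e j).2 ∈ B0
      · exact hC j hj (Or.inr ⟨hwB, (edge_mk _ x hwB hx hpar0).trans hmk⟩)
      · have hnb : ¬ ElimTree.Bad (f 0) (f ℓ) (e j).2 := hwB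
        have hcheq : (f 0).children (e j).2 = (f ℓ).children (e j).2 := by
          by_contra hne'
          exact hnb (Or.inl hne')
        have hx0 : x ∈ (f 0).children (e j).2 := hpar0
        rw [hcheq] at hx0
        have hxl : (f ℓ).parent x = some ((e j).2) := hx0
        exact hpb (hpar0.trans hxl.symm)
    -- take a representative
    obtain ⟨x₀, hx₀mk⟩ := C.exists_rep
    have hx₀B : (x₀ : V) ∈ B0 := x₀.2
    have hmk₀ : H.connectedComponentMk ⟨(x₀ : V), hx₀B⟩ = C := hx₀mk
    have hbad : ElimTree.Bad (f 0) (f ℓ) (x₀ : V) := hx₀B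
    have hpe := hnp (x₀ : V) hx₀B hmk₀
    have hcb : (f 0).children (x₀ : V) ≠ (f ℓ).children (x₀ : V) := by
      rcases hbad with hcb | hpb
      · exact hcb
      · exact absurd hpe hpb
    have hnc : ((f ℓ).children (x₀ : V)).ncard = ((f 0).children (x₀ : V)).ncard :=
      ElimTree.seq_children_ncard hrot (hnend (x₀ : V) hx₀B hmk₀) ℓ le_rfl
    have hsub : ¬ ((f 0).children (x₀ : V) ⊆ (f ℓ).children (x₀ : V)) := by
      intro hss
      exact hcb (Set.eq_of_subset_of_ncard_le hss (le_of_eq hnc))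
    obtain ⟨u', hu'0, hu'l⟩ := Set.not_subset.mp hsub
    have hu'par : (f 0).parent u' = some (x₀ : V) := hu'0
    have hu'pb : (f 0).parent u' ≠ (f ℓ).parent u' := by
      intro heq
      apply hu'l
      show (f ℓ).parent u' = some (x₀ : V)
      rw [← heq]
      exact hu'par
    have hu'B : u' ∈ B0 := Or.inr hu'pb
    have hu'mk : H.connectedComponentMk ⟨u', hu'B⟩ = C :=
      ((edge_mk (x₀ : V) u' hx₀B hu'B hu'par).symm).trans hmk₀
    exact hu'pb (hnp u' hu'B hu'mk)
  -- minimal endpoint times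
  let Ψ : H.ConnectedComponent → ℕ := fun C => sInf (EP C)
  have hΨmem : ∀ C : H.ConnectedComponent,
      Ψ C < ℓ ∧ (inC (e (Ψ C)).1 C ∨ inC (e (Ψ C)).2 C) :=
    fun C => Nat.sInf_mem (hEP C)
  have hΨle : ∀ (C : H.ConnectedComponent) (j : ℕ), j ∈ EP C → Ψ C ≤ j :=
    fun C j hj => Nat.sInf_le hj
  -- CLAIM (E2) : the minimal endpoint time map is injective
  have hinj : Function.Injective Ψ := by
    intro C C' hΨeq
    by_contra hCC
    obtain ⟨hiℓ, hor⟩ := hΨmem C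
    have hor' : inC (e (Ψ C)).1 C' ∨ inC (e (Ψ C)).2 C' := by
      rw [hΨeq]; exact (hΨmem C').2
    have hpv : (f (Ψ C)).parent (e (Ψ C)).2 = some ((e (Ψ C)).1) := (hrot (Ψ C) hiℓ).1
    have hmin : ∀ (X : H.ConnectedComponent), Ψ X = Ψ C → ∀ j < Ψ C, ∀ x : V,
        ((e j).1 = x ∨ (e j).2 = x) → ¬ inC x X := by
      intro X hX j hj x hend hinCx
      have hmem : j ∈ EP X := by
        refine ⟨lt_trans hj hiℓ, ?_⟩
        rcases hend with hh | hh
        · exact Or.inl (by rw [hh]; exact hinCx)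
        · exact Or.inr (by rw [hh]; exact hinCx)
      have := hΨle X j hmem
      omega
    have core : ∀ X Y : H.ConnectedComponent, Ψ X = Ψ C → Ψ Y = Ψ C →
        inC (e (Ψ C)).1 X → inC (e (Ψ C)).2 Y → X = Y := by
      intro X Y hXi hYi hu hv
      obtain ⟨huB, hmku⟩ := hu
      obtain ⟨hvB, hmkv⟩ := hv
      by_cases h0 : (f 0).parent ((e (Ψ C)).2) = some ((e (Ψ C)).1)
      · rw [← hmku, ← hmkv]
        exact edge_mk _ _ huB hvB h0
      · have hch : (f (Ψ C)).parent ((e (Ψ C)).2) ≠ (f 0).parent ((e (Ψ C)).2) := by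
          rw [hpv]
          exact fun hc => h0 hc.symm
        obtain ⟨j, hj, hafter, hbefore⟩ := ElimTree.seq_last_change hch
        by_cases hv1 : (e j).1 = (e (Ψ C)).2
        · exact absurd ⟨hvB, hmkv⟩ (hmin Y hYi j hj _ (Or.inl hv1))
        · by_cases hv2 : (e j).2 = (e (Ψ C)).2
          · exact absurd ⟨hvB, hmkv⟩ (hmin Y hYi j hj _ (Or.inr hv2))
          · have hcls := ElimTree.rot_parent_change (hrot j (lt_trans hj hiℓ))
              (fun hh => hv1 hh.symm) (fun hh => hv2 hh.symm)
              (by rw [hafter]; exact fun hc => hbefore hc.symm)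
            have hu1 : (e j).1 = (e (Ψ C)).1 := by
              have h1 := hcls.2
              rw [hafter, hpv] at h1
              exact (Option.some_injective _ h1).symm
            exact absurd ⟨huB, hmku⟩ (hmin X hXi j hj _ (Or.inl hu1))
    rcases hor with hu | hv <;> rcases hor' with hu' | hv'
    · exact hCC (inC_unique _ _ _ hu hu')
    · exact hCC (core C C' rfl hΨeq.symm hu hv')
    · exact hCC (core C' C hΨeq.symm rfl hu' hv).symm
    · exact hCC (inC_unique _ _ _ hv hv')
  -- counting
  have hcard : Nat.card H.ConnectedComponent ≤ ℓ := by
    have hlt : ∀ C, Ψ C < ℓ := fun C => (hΨmem C).1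
    have hinj' : Function.Injective (fun C => (⟨Ψ C, hlt C⟩ : Fin ℓ)) := by
      intro a b hab
      apply hinj
      exact congrArg Fin.val hab
    calc Nat.card H.ConnectedComponent ≤ Nat.card (Fin ℓ) :=
          Nat.card_le_card_of_injective _ hinj'
      _ = ℓ := by simp
  omega
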